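/- Let C be a cycle and (Z₁, Z₂, Z₃, Z₄) a nontrivial (C, r)-scheme with |Z₁| = |Z₂| = 1. Then |V(C)| ≥ min{2·Σᵢ|Zᵢ| + 4r − 18, r(Σᵢ|Zᵢ| − 2)/2}. -/

import Mathlib

open SimpleGraph

open Fin.NatCast Fin.CommRing in
private lemma cycle_dist_add_le (n : ℕ) [NeZero n] (hn : 3 ≤ n) (a : Fin n) (t : ℕ) :
    (cycleGraph n).dist a (a + (t : Fin n)) ≤ t := by
  induction t with
  | zero => simp
  | succ t ih =>
    have hconn : (cycleGraph n).Connected := by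
      obtain ⟨n', rfl⟩ : ∃ n', n = n' + 1 := ⟨n - 1, by omega⟩
      exact cycleGraph_connected
    have hadj : (cycleGraph n).Adj (a + (t : Fin n)) (a + ((t + 1 : ℕ) : Fin n)) := by
      have h1 : a + ((t + 1 : ℕ) : Fin n) - (a + (t : Fin n)) = 1 := by
        push_cast
        ring
      rw [cycleGraph_adj']
      right
      rw [h1, Fin.val_one']
      exact Nat.mod_eq_of_lt (by omega)
    calc (cycleGraph n).dist a (a + ((t + 1 : ℕ) : Fin n))
        ≤ (cycleGraph n).dist a (a + (t : Fin n))
          + (cycleGraph n).dist (a + (t : Fin n)) (a + ((t + 1 : ℕ) : Fin n)) :=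
          hconn.dist_triangle
      _ ≤ t + 1 := add_le_add ih ((dist_le hadj.toWalk).trans (by simp))

open Fin.NatCast in
private lemma cycle_dist_le (n : ℕ) [NeZero n] (hn : 3 ≤ n) (x y : Fin n) (t : ℕ)
    (h : (x.val + t) % n = y.val) : (cycleGraph n).dist x y ≤ t := by
  have key : (x.val + t % n) % n = y.val := by
    conv_rhs => rw [← h]
    rw [Nat.add_mod x.val (t % n) n, Nat.mod_mod_of_dvd t dvd_rfl, ← Nat.add_mod]
  have hxy : y = x + (t : Fin n) := by
    apply Fin.ext
    simp only [Fin.add_def, Fin.val_natCast]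
    exact key.symm
  rw [hxy]
  exact cycle_dist_add_le n hn x t

private lemma periodic_shift {α : Type*} {m : ℕ} (c : ℕ → α)
    (hper : ∀ i, c (i % m) = c i) (x L : ℕ) : c (x + m * L) = c x := by
  rw [← hper (x + m * L), ← hper x, Nat.add_mul_mod_self_left]

private lemma change_of_value {α : Type*} {m : ℕ} (hm : 0 < m) (c : ℕ → α)
    (hper : ∀ i, c (i % m) = c i) (hnc : ∃ t < m, c t ≠ c (t + 1)) (i : ℕ) :
    ∃ p < m, c p = c i ∧ c p ≠ c (p + 1) := by
  classical
  have hex : ∃ t, c (i + t) ≠ c (i + t + 1) := by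
    by_contra hcon
    push_neg at hcon
    have tail : ∀ t, c (i + t) = c i := by
      intro t
      induction t with
      | zero => rfl
      | succ t ih => rw [← Nat.add_assoc, ← hcon t, ih]
    have hall : ∀ j, c j = c i := by
      intro j
      have h1 : c j = c (j % m + m * (i + 1)) := by
        rw [periodic_shift c hper, hper]
      have h3 : j % m + m * (i + 1) = i + (j % m + m * (i + 1) - i) := by
        have : i + 1 ≤ m * (i + 1) := Nat.le_mul_of_pos_left _ hm
        omega
      rw [h1, h3, tail]
    obtain ⟨t, ht, hne⟩ := hnc
    exact hne ((hall t).trans (hall (t + 1)).symm)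
  set t0 := Nat.find hex with ht0
  have hspec : c (i + t0) ≠ c (i + t0 + 1) := Nat.find_spec hex
  have hconst : ∀ u, u ≤ t0 → c (i + u) = c i := by
    intro u hu
    induction u with
    | zero => rfl
    | succ u ih =>
      have h1 : c (i + u) = c (i + u + 1) := by
        by_contra hne
        exact absurd (Nat.find_min hex (show u < t0 by omega)) (by simpa using hne)
      rw [← Nat.add_assoc, ← h1, ih (by omega)]
  refine ⟨(i + t0) % m, Nat.mod_lt _ hm, ?_, ?_⟩
  · rw [hper]
    exact hconst t0 le_rfl
  · rw [hper]
    have h3 : c ((i + t0) % m + 1) = c (i + t0 + 1) := by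
      rw [← hper ((i + t0) % m + 1), Nat.mod_add_mod, hper]
    rw [h3]
    exact hspec

private lemma exists_change_of_ne {α : Type*} {m : ℕ} (hm : 0 < m) (c : ℕ → α)
    (hper : ∀ i, c (i % m) = c i) (i j : ℕ) (hij : c i ≠ c j) :
    ∃ t < m, c t ≠ c (t + 1) := by
  by_contra hcon
  push_neg at hcon
  have step : ∀ t, c t = c (t + 1) := by
    intro t
    have h1 : c (t % m) = c (t % m + 1) := hcon _ (Nat.mod_lt _ hm)
    have h2 : c (t % m + 1) = c (t + 1) := by
      rw [← hper (t % m + 1), Nat.mod_add_mod, hper]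
    rw [hper] at h1
    rw [h1, h2]
  have hall : ∀ t, c t = c 0 := by
    intro t
    induction t with
    | zero => rfl
    | succ t ih => rw [← step t, ih]
  exact hij ((hall i).trans (hall j).symm)

private lemma values_le_changes {α : Type*} [DecidableEq α] {m : ℕ} (hm : 0 < m) (c : ℕ → α)
    (hper : ∀ i, c (i % m) = c i) (hnc : ∃ t < m, c t ≠ c (t + 1)) (S : Finset α)
    (hS : ∀ a ∈ S, ∃ i, c i = a) :
    S.card ≤ ((Finset.range m).filter (fun i => c i ≠ c (i + 1))).card := by
  classical
  have key : ∀ a ∈ S, ∃ p ∈ (Finset.range m).filter (fun i => c i ≠ c (i + 1)), c p = a := by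
    intro a ha
    obtain ⟨i, hi⟩ := hS a ha
    obtain ⟨p, hpm, hpc, hpch⟩ := change_of_value hm c hper hnc i
    exact ⟨p, by simp [Finset.mem_filter, Finset.mem_range, hpm, hpch], hpc.trans hi⟩
  choose g hg hgc using key
  refine Finset.card_le_card_of_injOn (fun a => if h : a ∈ S then g a h else 0) ?_ ?_
  · intro a ha
    simpa [Finset.mem_coe.mp ha] using hg a ha
  · intro a ha b hb hab
    simp only [Finset.mem_coe] at ha hb
    simp only [dif_pos ha, dif_pos hb] at hab
    rw [← hgc a ha, ← hgc b hb, hab]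

private lemma exists_rise {m : ℕ} (hm : 0 < m) (P : ℕ → Bool)
    (hper : ∀ i, P (i % m) = P i) (i j : ℕ) (hPi : P i = false) (hPj : P j = true) :
    ∃ t < m, P t = false ∧ P (t + 1) = true := by
  by_contra hcon
  push_neg at hcon
  have step : ∀ t, P t = false → P (t + 1) = false := by
    intro t ht
    have h1 : P (t % m) = false := by rw [hper]; exact ht
    have h2 := hcon (t % m) (Nat.mod_lt _ hm) h1
    have h3 : P (t % m + 1) = P (t + 1) := by
      rw [← hper (t % m + 1), Nat.mod_add_mod, hper]
    rw [h3] at h2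
    simpa using h2
  have spread : ∀ t, P (i + t) = false := by
    intro t
    induction t with
    | zero => simpa using hPi
    | succ t ih => rw [← Nat.add_assoc]; exact step _ ih
  have h1 : P j = P (j % m + m * (i + 1)) := by
    rw [periodic_shift P hper, hper]
  have h3 : j % m + m * (i + 1) = i + (j % m + m * (i + 1) - i) := by
    have : i + 1 ≤ m * (i + 1) := Nat.le_mul_of_pos_left _ hm
    omega
  rw [hPj] at h1
  rw [h3, spread] at h1
  simp at h1

set_option maxHeartbeats 1000000 in
/-- If `(Z 0, Z 1, Z 2, Z 3)` is a nontrivial `(C, r)`-scheme on a cycle `C` with `n`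
vertices and `|Z 0| = |Z 1| = 1`, then
`n ≥ min{2 Σᵢ |Z i| + 4r − 18, r (Σᵢ |Z i| − 2)/2}`. -/
theorem cycle_scheme_four (n r : ℕ) (hn : 3 ≤ n) (hr : 2 ≤ r)
    (Z : Fin 4 → Finset (Fin n)) (hZ1 : (Z 0).card = 1) (hZ2 : (Z 1).card = 1)
    (hsame : ∀ i, ∀ x ∈ Z i, ∀ y ∈ Z i, x ≠ y → 2 ≤ (cycleGraph n).dist x y)
    (hcross : ∀ i j, i ≠ j → ∀ x ∈ Z i, ∀ y ∈ Z j, x ≠ y →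
      r ≤ (cycleGraph n).dist x y)
    (hsdr : ∃ ξ : Fin 4 → Fin n, Function.Injective ξ ∧ ∀ i, ξ i ∈ Z i) :
    (n : ℚ) ≥ min (2 * (∑ i, (Z i).card) + 4 * r - 18)
      (r * ((∑ i, (Z i).card) - 2) / 2) := by
  classical
  haveI : NeZero n := ⟨by omega⟩
  obtain ⟨ξ, hξinj, hξmem⟩ := hsdr
  set U : Finset (Fin n) := Z 0 ∪ Z 1 ∪ Z 2 ∪ Z 3 with hU
  have hZU : ∀ a, Z a ⊆ U := by
    intro a x hx
    fin_cases a <;> simp [hU, Finset.mem_union] at hx ⊢ <;> tauto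
  have hUZ : ∀ x ∈ U, ∃ a, x ∈ Z a := by
    intro x hx
    simp only [hU, Finset.mem_union] at hx
    rcases hx with ((h | h) | h) | h
    exacts [⟨0, h⟩, ⟨1, h⟩, ⟨2, h⟩, ⟨3, h⟩]
  set m := U.card with hm
  have hm4 : 4 ≤ m := by
    have h1 : (Finset.univ.image ξ).card = 4 := by
      rw [Finset.card_image_of_injective _ hξinj, Finset.card_univ, Fintype.card_fin]
    have h2 : Finset.univ.image ξ ⊆ U := by
      intro x hx
      simp only [Finset.mem_image, Finset.mem_univ, true_and] at hx
      obtain ⟨a, rfl⟩ := hx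
      exact hZU a (hξmem a)
    calc 4 = (Finset.univ.image ξ).card := h1.symm
      _ ≤ m := Finset.card_le_card h2
  have hm0 : 0 < m := by omega
  set e := U.orderIsoOfFin rfl with he
  set v : ℕ → Fin n := fun i => (e ⟨i % m, Nat.mod_lt _ hm0⟩ : Fin n) with hv
  have hvmem : ∀ i, v i ∈ U := fun i => (e _).2
  have hvper : ∀ i, v (i % m) = v i := by
    intro i
    simp only [hv, Nat.mod_mod_of_dvd _ dvd_rfl]
  have hvmono : ∀ i j, i < j → j < m → (v i).val < (v j).val := by
    intro i j hij hjm
    have h1 : (⟨i % m, Nat.mod_lt _ hm0⟩ : Fin m) < ⟨j % m, Nat.mod_lt _ hm0⟩ := by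
      simp only [Fin.mk_lt_mk]
      rw [Nat.mod_eq_of_lt (by omega), Nat.mod_eq_of_lt hjm]
      exact hij
    exact (e.lt_iff_lt.mpr h1 : (e _ : {x // x ∈ U}) < e _)
  have hvsurj : ∀ x ∈ U, ∃ i < m, v i = x := by
    intro x hx
    refine ⟨(e.symm ⟨x, hx⟩).val, (e.symm ⟨x, hx⟩).isLt, ?_⟩
    simp only [hv]
    have : (⟨(e.symm ⟨x, hx⟩).val % m, Nat.mod_lt _ hm0⟩ : Fin m) = e.symm ⟨x, hx⟩ := by
      apply Fin.ext
      exact Nat.mod_eq_of_lt (e.symm ⟨x, hx⟩).isLt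
    rw [this]
    simp
  set w : ℕ → ℕ := fun i => (v i).val with hw
  set gap : ℕ → ℕ := fun i => if i + 1 < m then w (i + 1) - w i else (n + w 0) - w i
    with hgap
  have hwlt : ∀ i, w i < n := fun i => (v i).isLt
  -- telescoping sum
  have tel : ∀ j, j ≤ m - 1 → w 0 ≤ w j ∧ (∑ i ∈ Finset.range j, (w (i + 1) - w i)) = w j - w 0 := by
    intro j hj
    induction j with
    | zero => simp
    | succ j ih =>
      obtain ⟨h0, hsum⟩ := ih (by omega)
      have hle : w j ≤ w (j + 1) := le_of_lt (hvmono j (j + 1) (by omega) (by omega))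
      constructor
      · omega
      · rw [Finset.sum_range_succ, hsum]
        omega
  have hsum : (∑ i ∈ Finset.range m, gap i) = n := by
    obtain ⟨h0, hsum'⟩ := tel (m - 1) le_rfl
    have hmm : m = (m - 1) + 1 := by omega
    rw [hmm, Finset.sum_range_succ]
    have h1 : (∑ i ∈ Finset.range (m - 1), gap i)
        = ∑ i ∈ Finset.range (m - 1), (w (i + 1) - w i) := by
      apply Finset.sum_congr rfl
      intro i hi
      simp only [Finset.mem_range] at hi
      simp only [hgap, if_pos (show i + 1 < m by omega)]
    have h2 : gap (m - 1) = (n + w 0) - w (m - 1) := by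
      simp only [hgap, if_neg (show ¬(m - 1 + 1 < m) by omega)]
    rw [h1, hsum', h2]
    have := hwlt (m - 1)
    omega
  -- v at wrap-around
  have hvm0 : v m = v 0 := by
    rw [← hvper m, Nat.mod_self]
  have hvne : ∀ i, i < m → v i ≠ v (i + 1) := by
    intro i him
    by_cases h : i + 1 < m
    · intro hcon
      have := hvmono i (i + 1) (by omega) h
      rw [hcon] at this
      omega
    · have hi : i = m - 1 := by omega
      have h1 : v (i + 1) = v 0 := by
        rw [show i + 1 = m by omega, hvm0]
      rw [h1]
      intro hcon
      have := hvmono 0 i (by omega) him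
      rw [hcon] at this
      omega
  have hdist : ∀ i, i < m → (cycleGraph n).dist (v i) (v (i + 1)) ≤ gap i := by
    intro i him
    by_cases h : i + 1 < m
    · have hlt : w i < w (i + 1) := hvmono i (i + 1) (by omega) h
      have : gap i = w (i + 1) - w i := by simp only [hgap, if_pos h]
      rw [this]
      apply cycle_dist_le n hn
      have : w i + (w (i + 1) - w i) = w (i + 1) := by omega
      rw [this]
      exact Nat.mod_eq_of_lt (hwlt _)
    · have h1 : v (i + 1) = v 0 := by rw [show i + 1 = m by omega, hvm0]
      have : gap i = (n + w 0) - w i := by simp only [hgap, if_neg h]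
      rw [this, h1]
      apply cycle_dist_le n hn
      have h2 : w i + ((n + w 0) - w i) = n + w 0 := by
        have := hwlt i
        omega
      rw [h2, Nat.add_mod_left]
      exact Nat.mod_eq_of_lt (hwlt _)
  -- cross predicate
  set Cross : ℕ → Prop := fun i => ∃ a b : Fin 4, a ≠ b ∧ v i ∈ Z a ∧ v (i + 1) ∈ Z b
    with hCross
  set k := ((Finset.range m).filter Cross).card with hk
  have hkm : k ≤ m := by
    calc k ≤ (Finset.range m).card := Finset.card_filter_le _ _
      _ = m := Finset.card_range m
  have hgap2 : ∀ i ∈ Finset.range m, (if Cross i then r else 2) ≤ gap i := by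
    intro i hi
    simp only [Finset.mem_range] at hi
    have hne := hvne i hi
    by_cases hc : Cross i
    · rw [if_pos hc]
      obtain ⟨a, b, hab, ha, hb⟩ := hc
      exact le_trans (hcross a b hab _ ha _ hb hne) (hdist i hi)
    · rw [if_neg hc]
      obtain ⟨a, ha⟩ := hUZ _ (hvmem i)
      obtain ⟨b, hb⟩ := hUZ _ (hvmem (i + 1))
      by_cases hab : a = b
      · subst hab
        exact le_trans (hsame a _ ha _ hb hne) (hdist i hi)
      · exact absurd ⟨a, b, hab, ha, hb⟩ hc
  have hnlb : 2 * (m - k) + r * k ≤ n := by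
    have h1 : (∑ i ∈ Finset.range m, (if Cross i then r else 2))
        ≤ ∑ i ∈ Finset.range m, gap i := Finset.sum_le_sum hgap2
    rw [hsum] at h1
    have h2 : (∑ i ∈ Finset.range m, (if Cross i then r else 2))
        = r * k + 2 * (m - k) := by
      rw [Finset.sum_ite, Finset.sum_const, Finset.sum_const]
      have h3 : ((Finset.range m).filter (fun i => ¬ Cross i)).card = m - k := by
        have := Finset.card_filter_add_card_filter_not
          (s := Finset.range m) (p := Cross)
        rw [Finset.card_range] at this
        omega
      rw [h3]
      simp only [smul_eq_mul, hk]
      ring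
    omega
  -- coloring with four colors
  set f : Fin n → Fin 4 := fun x =>
    if x = ξ 0 then 0 else if x = ξ 1 then 1 else if x = ξ 3 then 3
    else if x ∈ Z 2 then 2 else if h : ∃ a, x ∈ Z a then h.choose else 0 with hf
  have hfmem : ∀ x ∈ U, x ∈ Z (f x) := by
    intro x hx
    simp only [hf]
    split_ifs with h0 h1 h3 h2 h4
    · rw [h0]; exact hξmem 0
    · rw [h1]; exact hξmem 1
    · rw [h3]; exact hξmem 3
    · exact h2
    · exact h4.choose_spec
    · exact absurd (hUZ x hx) h4
  have hξne : ∀ a b : Fin 4, a ≠ b → ξ a ≠ ξ b := fun a b h => hξinj.ne h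
  have hf0 : f (ξ 0) = 0 := by simp [hf]
  have hf1 : f (ξ 1) = 1 := by simp [hf, hξne 1 0 (by decide)]
  have hf3 : f (ξ 3) = 3 := by
    simp [hf, hξne 3 0 (by decide), hξne 3 1 (by decide)]
  have hf2 : f (ξ 2) = 2 := by
    simp [hf, hξne 2 0 (by decide), hξne 2 1 (by decide), hξne 2 3 (by decide), hξmem 2]
  have hfxi : ∀ a : Fin 4, f (ξ a) = a := by
    intro a
    fin_cases a
    exacts [hf0, hf1, hf2, hf3]
  set c : ℕ → Fin 4 := fun i => f (v i) with hc
  have hcper : ∀ i, c (i % m) = c i := by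
    intro i
    simp only [hc, hvper]
  have happear : ∀ a : Fin 4, ∃ i, c i = a := by
    intro a
    obtain ⟨i, him, hvi⟩ := hvsurj (ξ a) (hZU a (hξmem a))
    exact ⟨i, by rw [hc]; simp only; rw [hvi, hfxi]⟩
  have hncc : ∃ t < m, c t ≠ c (t + 1) := by
    obtain ⟨i0, hi0⟩ := happear 0
    obtain ⟨i1, hi1⟩ := happear 1
    exact exists_change_of_ne hm0 c hcper i0 i1 (by rw [hi0, hi1]; decide)
  have k4 : 4 ≤ k := by
    have h1 := values_le_changes hm0 c hcper hncc Finset.univ (fun a _ => happear a)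
    rw [Finset.card_univ, Fintype.card_fin] at h1
    refine le_trans h1 (Finset.card_le_card ?_)
    intro i hi
    rw [Finset.mem_filter] at hi ⊢
    refine ⟨hi.1, c i, c (i + 1), hi.2, hfmem _ (hvmem i), hfmem _ (hvmem (i + 1))⟩
  -- multiplicity and double points
  set p : Fin n → ℕ := fun x => (Finset.univ.filter (fun a => x ∈ Z a)).card with hp
  set D := U.filter (fun x => 2 ≤ p x) with hD
  set q := D.card with hq
  have hqm : q ≤ m := Finset.card_le_card (Finset.filter_subset _ _)
  have hDcross : ∀ x ∈ D, ∀ b : Fin 4, ∃ a, a ≠ b ∧ x ∈ Z a := by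
    intro x hx b
    rw [hD, Finset.mem_filter] at hx
    obtain ⟨hxU, hpx⟩ := hx
    obtain ⟨a1, ha1, a2, ha2, ha12⟩ := Finset.one_lt_card.mp
      (show 1 < (Finset.univ.filter (fun a => x ∈ Z a)).card from
        lt_of_lt_of_le one_lt_two hpx)
    simp only [Finset.mem_filter, Finset.mem_univ, true_and] at ha1 ha2
    by_cases hac : a1 = b
    · exact ⟨a2, by rw [← hac]; exact fun h => ha12 h.symm, ha2⟩
    · exact ⟨a1, hac, ha1⟩
  have hDgap : ∀ i, i < m → (v i ∈ D ∨ v (i + 1) ∈ D) → Cross i := by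
    intro i him hor
    rcases hor with h | h
    · obtain ⟨b', hb'⟩ := hUZ _ (hvmem (i + 1))
      obtain ⟨a, hab, ha⟩ := hDcross _ h b'
      exact ⟨a, b', hab, ha, hb'⟩
    · obtain ⟨a', ha'⟩ := hUZ _ (hvmem i)
      obtain ⟨b, hba, hb⟩ := hDcross _ h a'
      exact ⟨a', b, fun hcon => hba hcon.symm, ha', hb⟩
  set Sidx := (Finset.range m).filter (fun i => v i ∈ D) with hSidx
  have hSidxcard : Sidx.card = q := by
    rw [hq]
    apply Finset.card_bij (fun i _ => v i)
    · intro i hi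
      rw [hSidx, Finset.mem_filter] at hi
      exact hi.2
    · intro i hi j hj hij
      rw [hSidx, Finset.mem_filter, Finset.mem_range] at hi hj
      by_contra hne
      rcases Nat.lt_or_ge i j with hlt | hge
      · have := hvmono i j hlt hj.1
        rw [hij] at this
        omega
      · have hlt : j < i := by omega
        have := hvmono j i hlt hi.1
        rw [hij] at this
        omega
    · intro x hx
      have hxU : x ∈ U := (Finset.mem_filter.mp (hD ▸ hx)).1
      obtain ⟨i, him, hvi⟩ := hvsurj x hxU
      refine ⟨i, Finset.mem_filter.mpr ⟨Finset.mem_range.mpr him, ?_⟩, hvi⟩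
      rw [hvi]
      exact hx
  have K2a : q < m → q + 1 ≤ k := by
    intro hqltm
    rcases Nat.eq_zero_or_pos q with hq0 | hqpos
    · omega
    have hex0 : ∃ i0, i0 < m ∧ v i0 ∉ D := by
      by_contra hcon
      push_neg at hcon
      have heq : Sidx = Finset.range m := by
        refine Finset.Subset.antisymm (Finset.filter_subset _ _) ?_
        intro i hi
        exact Finset.mem_filter.mpr ⟨hi, hcon i (Finset.mem_range.mp hi)⟩
      rw [heq, Finset.card_range] at hSidxcard
      omega
    obtain ⟨i0, hi0m, hi0⟩ := hex0
    obtain ⟨x, hxD⟩ := Finset.card_pos.mp (by omega : 0 < D.card)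
    obtain ⟨j, hjm, hvj⟩ := hvsurj x (Finset.mem_filter.mp (hD ▸ hxD)).1
    set P : ℕ → Bool := fun i => decide (v i ∈ D) with hP
    have hPper : ∀ i, P (i % m) = P i := by
      intro i
      simp only [hP, hvper]
    obtain ⟨t, htm, htf, htt⟩ := exists_rise hm0 P hPper i0 j
      (by simp only [hP]; exact decide_eq_false hi0)
      (by simp only [hP]; rw [hvj]; exact decide_eq_true hxD)
    have htD : v t ∉ D := by
      intro hcon
      rw [hP] at htf
      simp only [decide_eq_false_iff_not] at htf
      exact htf hcon
    have htD1 : v (t + 1) ∈ D := by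
      rw [hP] at htt
      simpa only [decide_eq_true_eq] using htt
    have hins : insert t Sidx ⊆ (Finset.range m).filter Cross := by
      intro i hi
      rcases Finset.mem_insert.mp hi with rfl | hi'
      · exact Finset.mem_filter.mpr ⟨Finset.mem_range.mpr htm, hDgap i htm (Or.inr htD1)⟩
      · rw [hSidx, Finset.mem_filter, Finset.mem_range] at hi'
        exact Finset.mem_filter.mpr ⟨Finset.mem_range.mpr hi'.1,
          hDgap i hi'.1 (Or.inl hi'.2)⟩
    have htnot : t ∉ Sidx := by
      rw [hSidx, Finset.mem_filter]
      tauto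
    calc q + 1 = (insert t Sidx).card := by rw [Finset.card_insert_of_notMem htnot, hSidxcard]
      _ ≤ k := Finset.card_le_card hins
  have K2b : q = m → m ≤ k := by
    intro hqem
    have heq : Sidx = Finset.range m :=
      Finset.eq_of_subset_of_card_le (Finset.filter_subset _ _)
        (by rw [hSidxcard, hqem, Finset.card_range])
    have hsub : Finset.range m ⊆ (Finset.range m).filter Cross := by
      intro i hi
      have hiD : v i ∈ D := by
        have : i ∈ Sidx := heq ▸ hi
        exact (Finset.mem_filter.mp this).2
      exact Finset.mem_filter.mpr ⟨hi, hDgap i (Finset.mem_range.mp hi) (Or.inl hiD)⟩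
    calc m = (Finset.range m).card := (Finset.card_range m).symm
      _ ≤ k := Finset.card_le_card hsub
  -- bounding the total size
  have h0mem : ∀ y ∈ Z 0, y = ξ 0 := by
    intro y hy
    exact Finset.card_le_one.mp (le_of_eq hZ1) y hy (ξ 0) (hξmem 0)
  have h1mem : ∀ y ∈ Z 1, y = ξ 1 := by
    intro y hy
    exact Finset.card_le_one.mp (le_of_eq hZ2) y hy (ξ 1) (hξmem 1)
  have hs : (∑ i, (Z i).card) ≤ m + q + 2 := by
    have hswap : (∑ a, (Z a).card) = ∑ x ∈ U, p x := by
      have hZeq : ∀ a, (Z a).card = ∑ x ∈ U, (if x ∈ Z a then 1 else 0) := by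
        intro a
        rw [← Finset.card_filter]
        congr 1
        rw [Finset.filter_mem_eq_inter, Finset.inter_eq_right.mpr (hZU a)]
      calc (∑ a, (Z a).card) = ∑ a : Fin 4, ∑ x ∈ U, (if x ∈ Z a then 1 else 0) :=
            Finset.sum_congr rfl (fun a _ => hZeq a)
        _ = ∑ x ∈ U, ∑ a : Fin 4, (if x ∈ Z a then 1 else 0) := Finset.sum_comm
        _ = ∑ x ∈ U, p x := by
            refine Finset.sum_congr rfl (fun x _ => ?_)
            exact (Finset.card_filter _ _).symm
    have hpoint : ∀ x ∈ U, p x ≤ 1 + (if 2 ≤ p x then 1 else 0)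
        + (if x = ξ 0 ∨ x = ξ 1 then 1 else 0) := by
      intro x hx
      by_cases hx01 : x = ξ 0 ∨ x = ξ 1
      · have hnot : ¬ (x ∈ Z 0 ∧ x ∈ Z 1) := by
          rintro ⟨ha, hb⟩
          exact hξne 0 1 (by decide) ((h0mem x ha).symm.trans (h1mem x hb))
        have hp3 : p x ≤ 3 := by
          rw [hp]
          by_cases hxz : x ∈ Z 0
          · have hsub : Finset.univ.filter (fun a => x ∈ Z a) ⊆ Finset.univ.erase 1 := by
              intro a ha
              simp only [Finset.mem_filter, Finset.mem_univ, true_and] at ha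
              refine Finset.mem_erase.mpr ⟨?_, Finset.mem_univ a⟩
              rintro rfl
              exact hnot ⟨hxz, ha⟩
            calc (Finset.univ.filter (fun a => x ∈ Z a)).card
                ≤ (Finset.univ.erase (1 : Fin 4)).card := Finset.card_le_card hsub
              _ = 3 := by rw [Finset.card_erase_of_mem (Finset.mem_univ _)]; simp
          · have hsub : Finset.univ.filter (fun a => x ∈ Z a) ⊆ Finset.univ.erase 0 := by
              intro a ha
              simp only [Finset.mem_filter, Finset.mem_univ, true_and] at ha
              refine Finset.mem_erase.mpr ⟨?_, Finset.mem_univ a⟩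
              rintro rfl
              exact hxz ha
            calc (Finset.univ.filter (fun a => x ∈ Z a)).card
                ≤ (Finset.univ.erase (0 : Fin 4)).card := Finset.card_le_card hsub
              _ = 3 := by rw [Finset.card_erase_of_mem (Finset.mem_univ _)]; simp
        by_cases h2 : 2 ≤ p x
        · rw [if_pos h2, if_pos hx01]
          omega
        · rw [if_neg h2, if_pos hx01]
          omega
      · have hp2 : p x ≤ 2 := by
          rw [hp]
          push_neg at hx01
          have hsub : Finset.univ.filter (fun a => x ∈ Z a) ⊆ ({2, 3} : Finset (Fin 4)) := by
            intro a ha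
            simp only [Finset.mem_filter, Finset.mem_univ, true_and] at ha
            fin_cases a
            · exact absurd (h0mem x ha) hx01.1
            · exact absurd (h1mem x ha) hx01.2
            · simp
            · simp
          calc (Finset.univ.filter (fun a => x ∈ Z a)).card
              ≤ ({2, 3} : Finset (Fin 4)).card := Finset.card_le_card hsub
            _ = 2 := by decide
        by_cases h2 : 2 ≤ p x
        · rw [if_pos h2, if_neg hx01]
          omega
        · rw [if_neg h2, if_neg hx01]
          omega
    have hbound : (∑ x ∈ U, p x) ≤ ∑ x ∈ U, (1 + (if 2 ≤ p x then 1 else 0)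
        + (if x = ξ 0 ∨ x = ξ 1 then 1 else 0)) := Finset.sum_le_sum hpoint
    have hsplit : (∑ x ∈ U, (1 + (if 2 ≤ p x then 1 else 0)
        + (if x = ξ 0 ∨ x = ξ 1 then 1 else 0))) = m + q + (U.filter
          (fun x => x = ξ 0 ∨ x = ξ 1)).card := by
      rw [Finset.sum_add_distrib, Finset.sum_add_distrib]
      have c1 : (∑ _x ∈ U, 1) = m := by
        rw [Finset.sum_const, smul_eq_mul, mul_one]
      have c2 : (∑ x ∈ U, (if 2 ≤ p x then 1 else 0)) = q := by
        rw [hq, hD]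
        exact (Finset.card_filter _ _).symm
      have c3 : (∑ x ∈ U, (if x = ξ 0 ∨ x = ξ 1 then 1 else 0))
          = (U.filter (fun x => x = ξ 0 ∨ x = ξ 1)).card :=
        (Finset.card_filter _ _).symm
      rw [c1, c2, c3]
    have hlast : (U.filter (fun x => x = ξ 0 ∨ x = ξ 1)).card ≤ 2 := by
      have hsub : U.filter (fun x => x = ξ 0 ∨ x = ξ 1) ⊆ {ξ 0, ξ 1} := by
        intro x hx
        have := (Finset.mem_filter.mp hx).2
        simp only [Finset.mem_insert, Finset.mem_singleton]
        exact this
      calc (U.filter (fun x => x = ξ 0 ∨ x = ξ 1)).card ≤ ({ξ 0, ξ 1} : Finset (Fin n)).card :=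
            Finset.card_le_card hsub
        _ ≤ 2 := Finset.card_insert_le _ _ |>.trans (by simp)
    omega
  -- final arithmetic
  have hs4 : 4 ≤ ∑ i, (Z i).card := by
    have h1 : ∀ a : Fin 4, 1 ≤ (Z a).card := fun a => Finset.card_pos.mpr ⟨ξ a, hξmem a⟩
    calc 4 = ∑ _a : Fin 4, 1 := by simp
      _ ≤ ∑ a, (Z a).card := Finset.sum_le_sum (fun a _ => h1 a)
  have pack : ∃ M K Q : ℕ, 2 * (M - K) + r * K ≤ n ∧ 4 ≤ K ∧ (Q < M → Q + 1 ≤ K) ∧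
      (Q = M → M ≤ K) ∧ Q ≤ M ∧ (∑ i, (Z i).card) ≤ M + Q + 2 ∧ 4 ≤ M ∧ K ≤ M :=
    ⟨m, k, q, hnlb, k4, K2a, K2b, hqm, hs, hm4, hkm⟩
  clear * - hn hr hs4 pack Z
  obtain ⟨M, K, Q, hnlb, k4, K2a, K2b, hqm, hs, hm4, hkm⟩ := pack
  set S := ∑ i, (Z i).card with hSdef
  clear_value S
  clear hSdef Z
  have hFQ : 2 * ((M : ℚ) - K) + r * K ≤ n := by
    have h1 : ((2 * (M - K) + r * K : ℕ) : ℚ) ≤ (n : ℚ) := Nat.cast_le.mpr hnlb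
    push_cast [Nat.cast_sub hkm] at h1
    linarith
  have hsQ : ((S : ℕ) : ℚ) ≤ (M : ℚ) + Q + 2 := by
    exact_mod_cast (Nat.cast_le (α := ℚ)).mpr hs
  have hk4Q : (4 : ℚ) ≤ K := by exact_mod_cast k4
  have hrQ : (2 : ℚ) ≤ r := by exact_mod_cast hr
  have hqmQ : (Q : ℚ) ≤ M := by exact_mod_cast hqm
  rw [ge_iff_le, Nat.cast_le]
  rcases le_or_gt Q 3 with hq3 | hq4
  · refine le_trans (min_le_left _ _) ?_
    have hq3Q : (Q : ℚ) ≤ 3 := by exact_mod_cast hq3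
    have e1 : ((r : ℚ) - 2) * ((K : ℚ) - 4) ≥ 0 :=
      mul_nonneg (by linarith) (by linarith)
    have hgoalQ : 2 * ((S : ℕ) : ℚ) + 4 * r ≤ (n : ℚ) + 18 := by
      nlinarith [hFQ, hsQ, e1]
    have hgoalN : 2 * (S) + 4 * r ≤ n + 18 := by exact_mod_cast hgoalQ
    omega
  · rcases eq_or_lt_of_le hqm with hqem | hqltm
    · refine le_trans (min_le_right _ _) ?_
      have hkem : K = M := le_antisymm hkm (K2b hqem)
      have hkemQ : (K : ℚ) = M := by exact_mod_cast hkem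
      have hqemQ : (Q : ℚ) = M := by exact_mod_cast hqem
      rw [hkemQ] at hFQ
      have hnrm : (r : ℚ) * M ≤ n := by linarith
      have h2m : ((S : ℕ) : ℚ) - 2 ≤ 2 * M := by linarith
      have hgoalQ : (r : ℚ) * (((S : ℕ) : ℚ) - 2) ≤ 2 * n := by
        nlinarith [hnrm, h2m, hrQ]
      have hgoalN : r * ((S) - 2) ≤ 2 * n := by
        have h2s : 2 ≤ S := by omega
        have hcast : ((r * ((S) - 2) : ℕ) : ℚ)
            = (r : ℚ) * (((S : ℕ) : ℚ) - 2) := by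
          push_cast [Nat.cast_sub h2s]
          ring
        rw [← Nat.cast_le (α := ℚ), hcast]
        push_cast
        exact_mod_cast hgoalQ
      omega
    · have hK : (Q : ℚ) + 1 ≤ K := by exact_mod_cast K2a hqltm
      rcases le_or_gt 4 r with hr4 | hr3
      · refine le_trans (min_le_left _ _) ?_
        have hr4Q : (4 : ℚ) ≤ r := by exact_mod_cast hr4
        have hq4Q : (4 : ℚ) ≤ Q := by exact_mod_cast hq4
        have e1 : ((r : ℚ) - 2) * ((K : ℚ) - (Q + 1)) ≥ 0 :=
          mul_nonneg (by linarith) (by linarith)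
        have e2 : ((r : ℚ) - 4) * ((Q : ℚ) - 3) ≥ 0 :=
          mul_nonneg (by linarith) (by linarith)
        have hgoalQ : 2 * ((S : ℕ) : ℚ) + 4 * r ≤ (n : ℚ) + 18 := by
          nlinarith [hFQ, hsQ, e1, e2]
        have hgoalN : 2 * (S) + 4 * r ≤ n + 18 := by exact_mod_cast hgoalQ
        omega
      · refine le_trans (min_le_right _ _) ?_
        have hKQ : (Q : ℚ) + 1 ≤ K := hK
        have hgoalQ : (r : ℚ) * (((S : ℕ) : ℚ) - 2) ≤ 2 * n := by
          obtain rfl | rfl : r = 2 ∨ r = 3 := by omega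
          · push_cast at hFQ ⊢
            linarith
          · push_cast at hFQ ⊢
            linarith
        have hgoalN : r * ((S) - 2) ≤ 2 * n := by
          have h2s : 2 ≤ S := by omega
          have hcast : ((r * ((S) - 2) : ℕ) : ℚ)
              = (r : ℚ) * (((S : ℕ) : ℚ) - 2) := by
            push_cast [Nat.cast_sub h2s]
            ring
          rw [← Nat.cast_le (α := ℚ), hcast]
          push_cast
          exact_mod_cast hgoalQ
        omega
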